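/- Let (H,•,1,Δ,ε,T) be a Hopf algebra, ⇀: H⊗H→H a coalgebra morphism, ↼: H⊗H→H a linear map with ε(a↼b)=ε(a)ε(b), such that a•b=(a₁⇀b₁)•(a₂↼b₂). Then the following are equivalent: (i) ↼ is a coalgebra morphism, i.e. Δ(a↼b)=(a₁↼b₁)⊗(a₂↼b₂); (ii) (a₂↼b₂)⊗((a₁⇀b₁)•(a₃↼b₃)) = (a₁↼b₁)⊗(a₂•b₂); (iii) ((a₁⇀b₁)•(a₃↼b₃))⊗(a₂⇀b₂) = (a₁•b₁)⊗(a₂⇀b₂); (iv) (a₁⇀b₁)⊗(a₂↼b₂) = (a₂⇀b₂)⊗(a₁↼b₁). -/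

import Mathlib

open TensorProduct

noncomputable section

variable (k H : Type*) [Field k] [Ring H] [HopfAlgebra k H]

/-- Multiplication of `H` as a linear map. -/
def mu : H ⊗[k] H →ₗ[k] H := LinearMap.mul' k H
/-- Comultiplication. -/
def delta : H →ₗ[k] H ⊗[k] H := Coalgebra.comul
/-- Counit. -/
def eps : H →ₗ[k] k := Coalgebra.counit
/-- Flip `a⊗b ↦ b⊗a`. -/
def tau : H ⊗[k] H →ₗ[k] H ⊗[k] H := (TensorProduct.comm k H H).toLinearMap
/-- Associator. -/
def assocMap : (H ⊗[k] H) ⊗[k] H →ₗ[k] H ⊗[k] (H ⊗[k] H) :=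
  (TensorProduct.assoc k H H H).toLinearMap
/-- Inverse associator. -/
def assocInv : H ⊗[k] (H ⊗[k] H) →ₗ[k] (H ⊗[k] H) ⊗[k] H :=
  (TensorProduct.assoc k H H H).symm.toLinearMap
/-- The middle-four interchange `(a⊗b)⊗(c⊗d) ↦ (a⊗c)⊗(b⊗d)`. -/
def ttcMap : (H ⊗[k] H) ⊗[k] (H ⊗[k] H) →ₗ[k] (H ⊗[k] H) ⊗[k] (H ⊗[k] H) :=
  (TensorProduct.tensorTensorTensorComm k H H H H).toLinearMap
/-- `a⊗b ↦ (a₁⊗b₁)⊗(a₂⊗b₂)` (Sweedler notation). -/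
def dd : H ⊗[k] H →ₗ[k] (H ⊗[k] H) ⊗[k] (H ⊗[k] H) :=
  ttcMap k H ∘ₗ map (delta k H) (delta k H)
/-- `a⊗b ↦ ((a₁⊗b₁)⊗(a₂⊗b₂))⊗(a₃⊗b₃)`. -/
def ddd : H ⊗[k] H →ₗ[k] ((H ⊗[k] H) ⊗[k] (H ⊗[k] H)) ⊗[k] (H ⊗[k] H) :=
  map (dd k H) LinearMap.id ∘ₗ dd k H
/-- `a⊗b ↦ ε(a)ε(b)`. -/
def epseps : H ⊗[k] H →ₗ[k] k := LinearMap.mul' k k ∘ₗ map (eps k H) (eps k H)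
/-- `σ(a⊗b) = (a₁⇀b₁)⊗(a₂↼b₂)` attached to a pair of "actions". -/
def sig (l r : H ⊗[k] H →ₗ[k] H) : H ⊗[k] H →ₗ[k] H ⊗[k] H :=
  map l r ∘ₗ dd k H

/-- The antipode of `H`. -/
def anti : H →ₗ[k] H := HopfAlgebra.antipode k

/-- A matched pair of actions `(H,⇀,↼)` on the Hopf algebra `H` (Definition 2.1):
`l`, `r` are a left and a right action of `H` on itself making `H` a left and right
`H`-module coalgebra, satisfying (mp.1)–(mp.4) and the braided commutativity (★). -/
structure MatchedPairOfActions (l r : H ⊗[k] H →ₗ[k] H) : Prop where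
  one_act : ∀ b : H, l ((1 : H) ⊗ₜ[k] b) = b
  mul_act : ∀ a b c : H, l ((a * b) ⊗ₜ[k] c) = l (a ⊗ₜ[k] l (b ⊗ₜ[k] c))
  act_one : ∀ a : H, r (a ⊗ₜ[k] (1 : H)) = a
  act_mul : ∀ a b c : H, r (a ⊗ₜ[k] (b * c)) = r (r (a ⊗ₜ[k] b) ⊗ₜ[k] c)
  comul_l : delta k H ∘ₗ l = map l l ∘ₗ dd k H
  counit_l : eps k H ∘ₗ l = epseps k H
  comul_r : delta k H ∘ₗ r = map r r ∘ₗ dd k H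
  counit_r : eps k H ∘ₗ r = epseps k H
  mp1 : ∀ a : H, l (a ⊗ₜ[k] (1 : H)) = eps k H a • (1 : H)
  mp2 : ∀ b : H, r ((1 : H) ⊗ₜ[k] b) = eps k H b • (1 : H)
  mp3 : l ∘ₗ map LinearMap.id (mu k H) ∘ₗ assocMap k H
      = mu k H ∘ₗ map LinearMap.id l ∘ₗ assocMap k H ∘ₗ map (sig k H l r) LinearMap.id
  mp4 : r ∘ₗ map (mu k H) LinearMap.id
      = mu k H ∘ₗ map r LinearMap.id ∘ₗ assocInv k H ∘ₗ map LinearMap.id (sig k H l r) ∘ₗ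
          assocMap k H
  star : mu k H ∘ₗ sig k H l r = mu k H

/-- The second product `a·b := a₁•(T(a₂)⇀b)` attached to a left action `l = ⇀`. -/
def cdot (l : H ⊗[k] H →ₗ[k] H) : H ⊗[k] H →ₗ[k] H :=
  mu k H ∘ₗ map LinearMap.id l ∘ₗ assocMap k H ∘ₗ
    map (map LinearMap.id (anti k H) ∘ₗ delta k H) LinearMap.id

/-- The map `S(a) := a₁⇀T(a₂)` attached to a left action `l = ⇀`. -/
def Smap (l : H ⊗[k] H →ₗ[k] H) : H →ₗ[k] H :=
  l ∘ₗ map LinearMap.id (anti k H) ∘ₗ delta k H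

/-!
In the convolution algebra of linear maps `H ⊗ H → H ⊗ H`, put `α = l ⊗ 1`, `β = 1 ⊗ l`,
`γ = r ⊗ 1` and `δ = 1 ⊗ r`. As `l` is a coalgebra map, `α` and `β` are convolution
invertible (with inverses obtained from the antipode). Condition (★) says `l ⋆ r = μ`, hence
`α γ = μ ⊗ 1` and `β δ = 1 ⊗ μ`; since `μ` is a coalgebra map as well, `δ` is invertible.
Computing `Δ ∘ μ` in two ways gives `α β (Δ ∘ r) = α γ β δ`, so (i) reads
`α β γ δ = α γ β δ`; (ii) and (iii) read `β γ δ = γ β δ` and `α β γ = α γ β`, and (iv) reads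
`α δ = δ α`, which the flip of the two tensor factors (exchanging `α ↔ β` and `γ ↔ δ`) turns
into `β γ = γ β`. Cancelling units, all four conditions say that `β` and `γ` commute.
-/

open WithConv

namespace LinearMap

section Convolution

variable {R C A B : Type*} [CommSemiring R] [AddCommMonoid C] [Module R C] [Coalgebra R C]
  [Semiring A] [Algebra R A] [Semiring B] [Algebra R B]

def convCompAlgHom (φ : A →ₐ[R] B) : WithConv (C →ₗ[R] A) →* WithConv (C →ₗ[R] B) where
  toFun f := toConv (φ.toLinearMap ∘ₗ f.ofConv)
  map_one' := by ext c; simp [convOne_def]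
  map_mul' f g := WithConv.ext (algHom_comp_convMul_distrib φ f g)

@[simp]
lemma ofConv_convCompAlgHom (φ : A →ₐ[R] B) (f : WithConv (C →ₗ[R] A)) :
    (convCompAlgHom φ f).ofConv = φ.toLinearMap ∘ₗ f.ofConv :=
  rfl

lemma convCompAlgHom_injective {φ : A →ₐ[R] B} (hφ : Function.Injective φ) :
    Function.Injective (convCompAlgHom (C := C) φ) := by
  intro f g h
  ext c
  exact hφ (LinearMap.congr_fun (congrArg ofConv h) c)

abbrev includeLeftConv : WithConv (C →ₗ[R] A) →* WithConv (C →ₗ[R] A ⊗[R] B) :=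
  convCompAlgHom Algebra.TensorProduct.includeLeft

abbrev includeRightConv : WithConv (C →ₗ[R] B) →* WithConv (C →ₗ[R] A ⊗[R] B) :=
  convCompAlgHom Algebra.TensorProduct.includeRight

lemma convCompAlgHom_comm_includeLeftConv (f : C →ₗ[R] A) :
    convCompAlgHom (Algebra.TensorProduct.comm R A B).toAlgHom (includeLeftConv (toConv f)) =
      includeRightConv (toConv f) := by
  ext c
  simp

lemma convCompAlgHom_comm_includeRightConv (g : C →ₗ[R] B) :
    convCompAlgHom (Algebra.TensorProduct.comm R A B).toAlgHom (includeRightConv (toConv g)) =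
      includeLeftConv (toConv g) := by
  ext c
  simp

lemma ofConv_includeLeftConv_mul_includeRightConv (f : C →ₗ[R] A) (g : C →ₗ[R] B) :
    (includeLeftConv (toConv f) * includeRightConv (toConv g)).ofConv =
      map f g ∘ₗ Coalgebra.comul := by
  ext c
  rw [(Coalgebra.Repr.arbitrary R c).convMul_apply]
  simp [← (Coalgebra.Repr.arbitrary R c).eq]

lemma ofConv_includeRightConv_mul_includeLeftConv (g : C →ₗ[R] B) (f : C →ₗ[R] A) :
    (includeRightConv (toConv g) * includeLeftConv (toConv f)).ofConv =
      (TensorProduct.comm R B A).toLinearMap ∘ₗ map g f ∘ₗ Coalgebra.comul := by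
  ext c
  rw [(Coalgebra.Repr.arbitrary R c).convMul_apply]
  simp [← (Coalgebra.Repr.arbitrary R c).eq]

lemma ofConv_mul_includeRightConv (F : WithConv (C →ₗ[R] A ⊗[R] B)) (g : C →ₗ[R] B) :
    (F * includeRightConv (toConv g)).ofConv =
      lTensor A (mul' R B) ∘ₗ (TensorProduct.assoc R A B B).toLinearMap ∘ₗ
        map F.ofConv g ∘ₗ Coalgebra.comul := by
  have hmul : mul' R (A ⊗[R] B) ∘ₗ map id Algebra.TensorProduct.includeRight.toLinearMap =
      lTensor A (mul' R B) ∘ₗ (TensorProduct.assoc R A B B).toLinearMap := by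
    ext a b c
    simp
  rw [convMul_def, ofConv_toConv, ofConv_convCompAlgHom, ofConv_toConv, ← id_comp F.ofConv,
    map_comp, ← comp_assoc, ← comp_assoc, hmul, id_comp]
  simp only [comp_assoc]

lemma isUnit_toConv_coalgHom {H : Type*} [Semiring H] [HopfAlgebra R H] (f : C →ₗc[R] H) :
    IsUnit (toConv f.toLinearMap) := by
  have hone : (1 : WithConv (H →ₗ[R] H)).ofConv ∘ₗ f.toLinearMap =
      (1 : WithConv (C →ₗ[R] H)).ofConv := by
    rw [convOne_def, ofConv_toConv, comp_assoc, f.counit_comp]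
    rfl
  refine isUnit_iff_exists.2 ⟨toConv (HopfAlgebra.antipode R ∘ₗ f.toLinearMap), ?_, ?_⟩
  · have h := convMul_comp_coalgHom_distrib (toConv id) (toConv (HopfAlgebra.antipode R)) f
    rw [id_mul_antipode, hone] at h
    exact WithConv.ext h.symm
  · have h := convMul_comp_coalgHom_distrib (toConv (HopfAlgebra.antipode R)) (toConv id) f
    rw [antipode_mul_id, hone] at h
    exact WithConv.ext h.symm

end Convolution

end LinearMap

open LinearMap

section Actions

variable {k H : Type*} [Field k] [Ring H] [HopfAlgebra k H]

theorem dd_eq_comul : dd k H = Coalgebra.comul := by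
  ext a b
  simp [dd, ttcMap, delta, AlgebraTensorModule.tensorTensorTensorComm_eq]

theorem epseps_eq_counit : epseps k H = Coalgebra.counit := by
  ext a b
  simp [epseps, eps, mul_comm]

theorem ofConv_includeRightConv_mul_includeLeftConv_mul_includeRightConv
    (f g h : H ⊗[k] H →ₗ[k] H) :
    (includeRightConv (toConv f) * includeLeftConv (toConv g) *
        includeRightConv (toConv h)).ofConv =
      map LinearMap.id (mu k H) ∘ₗ assocMap k H ∘ₗ map (tau k H) LinearMap.id ∘ₗ
        map (map f g) h ∘ₗ ddd k H := by
  rw [ofConv_mul_includeRightConv, ofConv_includeRightConv_mul_includeLeftConv, ddd, dd_eq_comul,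
    ← rTensor_comp_map, ← map_comp_rTensor]
  rfl

theorem ofConv_includeLeftConv_mul_includeRightConv_mul_includeLeftConv
    (f g h : H ⊗[k] H →ₗ[k] H) :
    (includeLeftConv (toConv f) * includeRightConv (toConv g) *
        includeLeftConv (toConv h)).ofConv =
      tau k H ∘ₗ map LinearMap.id (mu k H) ∘ₗ assocMap k H ∘ₗ
        map (tau k H) LinearMap.id ∘ₗ map (map f g) h ∘ₗ ddd k H := by
  rw [← ofConv_includeRightConv_mul_includeLeftConv_mul_includeRightConv,
    ← convCompAlgHom_comm_includeRightConv f, ← convCompAlgHom_comm_includeLeftConv g,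
    ← convCompAlgHom_comm_includeRightConv h, ← map_mul, ← map_mul]
  rfl

variable {l r : H ⊗[k] H →ₗ[k] H}

theorem toConv_mul_toConv_of_star (hstar : mu k H ∘ₗ sig k H l r = mu k H) :
    toConv l * toConv r = toConv (mu k H) := by
  rw [sig, dd_eq_comul] at hstar
  exact WithConv.ext hstar

theorem isUnit_toConv_of_comul (hcomul_l : delta k H ∘ₗ l = map l l ∘ₗ dd k H)
    (hcounit_l : eps k H ∘ₗ l = epseps k H) : IsUnit (toConv l) := by
  rw [dd_eq_comul] at hcomul_l
  rw [epseps_eq_counit] at hcounit_l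
  exact isUnit_toConv_coalgHom ⟨l, hcounit_l, hcomul_l.symm⟩


/-- Both sides are `Δ ∘ μ`: on the left `μ = l ⋆ r` and `Δ` is multiplicative, on the right
`Δ ∘ μ = (μ ⊗ 1) ⋆ (1 ⊗ μ)` since `μ` is a coalgebra map, and then again `μ = l ⋆ r`. -/
theorem includeConv_mul_toConv_comul_comp
    (hcomul_l : delta k H ∘ₗ l = map l l ∘ₗ dd k H) (hstar : mu k H ∘ₗ sig k H l r = mu k H) :
    includeLeftConv (toConv l) * includeRightConv (toConv l) * toConv (delta k H ∘ₗ r) =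
      includeLeftConv (toConv l) * includeLeftConv (toConv r) *
        (includeRightConv (toConv l) * includeRightConv (toConv r)) := by
  have hl : convCompAlgHom (Bialgebra.comulAlgHom k H) (toConv l) =
      includeLeftConv (toConv l) * includeRightConv (toConv l) := by
    ext1
    rw [ofConv_includeLeftConv_mul_includeRightConv, ← dd_eq_comul, ← hcomul_l]
    rfl
  have hmu : convCompAlgHom (Bialgebra.comulAlgHom k H) (toConv (mu k H)) =
      includeLeftConv (toConv (mu k H)) * includeRightConv (toConv (mu k H)) := by
    ext1
    rw [ofConv_includeLeftConv_mul_includeRightConv]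
    exact (Bialgebra.mulCoalgHom k H).map_comp_comul.symm
  calc includeLeftConv (toConv l) * includeRightConv (toConv l) * toConv (delta k H ∘ₗ r)
      = convCompAlgHom (Bialgebra.comulAlgHom k H) (toConv l * toConv r) := by
        rw [map_mul, hl]
        rfl
    _ = includeLeftConv (toConv (mu k H)) * includeRightConv (toConv (mu k H)) := by
        rw [toConv_mul_toConv_of_star hstar, hmu]
    _ = _ := by
        rw [← toConv_mul_toConv_of_star hstar, map_mul, map_mul]

theorem isUnit_includeRightConv_of_star (hcomul_l : delta k H ∘ₗ l = map l l ∘ₗ dd k H)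
    (hcounit_l : eps k H ∘ₗ l = epseps k H) (hstar : mu k H ∘ₗ sig k H l r = mu k H) :
    IsUnit (includeRightConv (A := H) (toConv r)) := by
  obtain ⟨u, hu⟩ := (isUnit_toConv_of_comul hcomul_l hcounit_l).map
    (includeRightConv (A := H) (B := H) (C := H ⊗[k] H))
  have hmu := (isUnit_toConv_coalgHom (Bialgebra.mulCoalgHom k H)).map
    (includeRightConv (A := H) (B := H) (C := H ⊗[k] H))
  rw [show (Bialgebra.mulCoalgHom k H).toLinearMap = mu k H from rfl,
    ← toConv_mul_toConv_of_star hstar, map_mul, ← hu] at hmu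
  exact (u.isUnit_units_mul _).1 hmu

theorem comul_comp_right_eq_iff_commute (hcomul_l : delta k H ∘ₗ l = map l l ∘ₗ dd k H)
    (hcounit_l : eps k H ∘ₗ l = epseps k H) (hstar : mu k H ∘ₗ sig k H l r = mu k H) :
    delta k H ∘ₗ r = map r r ∘ₗ dd k H ↔
      Commute (includeRightConv (A := H) (toConv l)) (includeLeftConv (B := H) (toConv r)) := by
  have hΔ := includeConv_mul_toConv_comul_comp hcomul_l hstar
  have hδ := isUnit_includeRightConv_of_star hcomul_l hcounit_l hstar
  rw [dd_eq_comul, ← ofConv_includeLeftConv_mul_includeRightConv, commute_iff_eq]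
  set α := includeLeftConv (B := H) (toConv l)
  set β := includeRightConv (A := H) (toConv l)
  set γ := includeLeftConv (B := H) (toConv r)
  set δ := includeRightConv (A := H) (toConv r)
  have hα : IsUnit α := (isUnit_toConv_of_comul hcomul_l hcounit_l).map _
  have hβ : IsUnit β := (isUnit_toConv_of_comul hcomul_l hcounit_l).map _
  calc delta k H ∘ₗ r = (γ * δ).ofConv ↔ toConv (delta k H ∘ₗ r) = γ * δ :=
        ⟨WithConv.ext, congrArg ofConv⟩
    _ ↔ α * β * toConv (delta k H ∘ₗ r) = α * β * (γ * δ) := (hα.mul hβ).mul_right_inj.symm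
    _ ↔ α * (γ * β) * δ = α * (β * γ) * δ := by
        rw [hΔ]
        simp only [mul_assoc]
    _ ↔ β * γ = γ * β := by rw [hδ.mul_left_inj, hα.mul_right_inj, eq_comm]

theorem right_tmul_mul_eq_iff_commute (hcomul_l : delta k H ∘ₗ l = map l l ∘ₗ dd k H)
    (hcounit_l : eps k H ∘ₗ l = epseps k H) (hstar : mu k H ∘ₗ sig k H l r = mu k H) :
    map LinearMap.id (mu k H) ∘ₗ assocMap k H ∘ₗ map (tau k H) LinearMap.id ∘ₗ
        map (map l r) r ∘ₗ ddd k H = map r (mu k H) ∘ₗ dd k H ↔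
      Commute (includeRightConv (A := H) (toConv l)) (includeLeftConv (B := H) (toConv r)) := by
  rw [← ofConv_includeRightConv_mul_includeLeftConv_mul_includeRightConv, dd_eq_comul,
    ← ofConv_includeLeftConv_mul_includeRightConv, ofConv_injective.eq_iff,
    ← toConv_mul_toConv_of_star hstar, map_mul, ← mul_assoc,
    (isUnit_includeRightConv_of_star hcomul_l hcounit_l hstar).mul_left_inj, commute_iff_eq]

theorem mul_tmul_left_eq_iff_commute (hcomul_l : delta k H ∘ₗ l = map l l ∘ₗ dd k H)
    (hcounit_l : eps k H ∘ₗ l = epseps k H) (hstar : mu k H ∘ₗ sig k H l r = mu k H) :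
    tau k H ∘ₗ map LinearMap.id (mu k H) ∘ₗ assocMap k H ∘ₗ map (tau k H) LinearMap.id ∘ₗ
        map (map l l) r ∘ₗ ddd k H = map (mu k H) l ∘ₗ dd k H ↔
      Commute (includeRightConv (A := H) (toConv l)) (includeLeftConv (B := H) (toConv r)) := by
  have hα := (isUnit_toConv_of_comul hcomul_l hcounit_l).map
    (includeLeftConv (A := H) (B := H) (C := H ⊗[k] H))
  rw [← ofConv_includeLeftConv_mul_includeRightConv_mul_includeLeftConv, dd_eq_comul,
    ← ofConv_includeLeftConv_mul_includeRightConv, ofConv_injective.eq_iff,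
    ← toConv_mul_toConv_of_star hstar, map_mul, mul_assoc, mul_assoc, hα.mul_right_inj,
    commute_iff_eq]

theorem left_tmul_right_eq_comm_iff_commute :
    map l r ∘ₗ dd k H = tau k H ∘ₗ map r l ∘ₗ dd k H ↔
      Commute (includeRightConv (A := H) (toConv l)) (includeLeftConv (B := H) (toConv r)) := by
  rw [dd_eq_comul, ← ofConv_includeLeftConv_mul_includeRightConv, tau,
    ← ofConv_includeRightConv_mul_includeLeftConv, ofConv_injective.eq_iff,
    ← (convCompAlgHom_injective (φ := (Algebra.TensorProduct.comm k H H).toAlgHom)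
      (Algebra.TensorProduct.comm k H H).injective).eq_iff,
    map_mul, map_mul]
  simp only [convCompAlgHom_comm_includeLeftConv, convCompAlgHom_comm_includeRightConv,
    commute_iff_eq]

end Actions

theorem equiv_conditions_colinearity (l r : H ⊗[k] H →ₗ[k] H)
    (hcomul_l : delta k H ∘ₗ l = map l l ∘ₗ dd k H)
    (hcounit_l : eps k H ∘ₗ l = epseps k H)
    (hstar : mu k H ∘ₗ sig k H l r = mu k H) :
    ((delta k H ∘ₗ r = map r r ∘ₗ dd k H) ↔
      (map LinearMap.id (mu k H) ∘ₗ assocMap k H ∘ₗ map (tau k H) LinearMap.id ∘ₗ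
          map (map l r) r ∘ₗ ddd k H
        = map r (mu k H) ∘ₗ dd k H)) ∧
    ((map LinearMap.id (mu k H) ∘ₗ assocMap k H ∘ₗ map (tau k H) LinearMap.id ∘ₗ
          map (map l r) r ∘ₗ ddd k H
        = map r (mu k H) ∘ₗ dd k H) ↔
      (tau k H ∘ₗ map LinearMap.id (mu k H) ∘ₗ assocMap k H ∘ₗ map (tau k H) LinearMap.id ∘ₗ
          map (map l l) r ∘ₗ ddd k H
        = map (mu k H) l ∘ₗ dd k H)) ∧
    ((tau k H ∘ₗ map LinearMap.id (mu k H) ∘ₗ assocMap k H ∘ₗ map (tau k H) LinearMap.id ∘ₗ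
          map (map l l) r ∘ₗ ddd k H
        = map (mu k H) l ∘ₗ dd k H) ↔
      (map l r ∘ₗ dd k H = tau k H ∘ₗ map r l ∘ₗ dd k H)) := by
  rw [comul_comp_right_eq_iff_commute hcomul_l hcounit_l hstar,
    right_tmul_mul_eq_iff_commute hcomul_l hcounit_l hstar,
    mul_tmul_left_eq_iff_commute hcomul_l hcounit_l hstar,
    left_tmul_right_eq_comm_iff_commute]
  exact ⟨Iff.rfl, Iff.rfl, Iff.rfl⟩

end
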